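/- arXiv:1906.04430 — 3 statements merged into one kernel-verified Lean document; each statement's English description precedes it below -/
import Mathlib

section
/- With E_π defined as the composition of supremum operators along a finite partition π of [0,t], define S(t)u := sup_{π ∈ P_t} E_π u (pointwise supremum over all finite partitions of [0,t] containing 0 and t). Then S satisfies the semigroup property S(s+t)u = S(s)S(t)u for all s,t ≥ 0, provided each E_h is monotone and continuous from below and for each u, t there is an increasing sequence of partitions π_n ∈ P_t with E_{π_n}u ↗ S(t)u. -/
/-! Since every `S_λ` is a semigroup and `E_h` is monotone, `E_{h₁+h₂} ≤ E_{h₁} E_{h₂}`; hence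
refining a partition can only increase `E_π u`. So in `S(s+t)u` one may restrict to partitions
containing `s`, and such a partition is a partition of `[0,s]` followed by a translate of a
partition of `[0,t]`, which gives `S(s+t)u ≤ S(s)S(t)u`. Conversely, for a partition `σ` of
`[0,s]`, continuity from below makes `E_σ S(t)u` the limit of `E_σ E_{π_n} u` along the
approximating partitions `π_n`, and each `E_σ E_{π_n} u` is `E_π u` for the concatenated partition
`π` of `[0,s+t]`. -/

noncomputable def applyPart {M : Type*} (E : ℝ → (M → ℝ) → (M → ℝ)) :
    List ℝ → (M → ℝ) → (M → ℝ)
  | a :: b :: rest, u => E (b - a) (applyPart E (b :: rest) u)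
  | _, u => u

/-- `E_π u` for a finite partition `π`. -/
noncomputable def Epart {M : Type*} (E : ℝ → (M → ℝ) → (M → ℝ))
    (π : Finset ℝ) (u : M → ℝ) : M → ℝ :=
  applyPart E (π.sort (· ≤ ·)) u

/-- The set of finite partitions of `[0,t]` (containing `0` and `t`). -/
def PartsOf (t : ℝ) : Set (Finset ℝ) :=
  {π | 0 ∈ π ∧ t ∈ π ∧ ∀ s ∈ π, 0 ≤ s ∧ s ≤ t}

/-- The Nisio semigroup: `S(t)u = ⨆_{π ∈ P_t} E_π u` pointwise. -/
noncomputable def Nisio {M : Type*} (E : ℝ → (M → ℝ) → (M → ℝ))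
    (t : ℝ) (u : M → ℝ) (x : M) : ℝ :=
  ⨆ π : PartsOf t, Epart E π.1 u x

open Filter Topology

def ContinuousFromBelow {M : Type*} (F : (M → ℝ) → M → ℝ) : Prop :=
  ∀ u : ℕ → M → ℝ, Monotone u → ∀ v, Tendsto u atTop (𝓝 v) → Tendsto (F ∘ u) atTop (𝓝 (F v))

theorem continuousFromBelow_id {M : Type*} : ContinuousFromBelow (id : (M → ℝ) → M → ℝ) :=
  fun _ _ _ hv => hv

theorem ContinuousFromBelow.comp {M : Type*} {F G : (M → ℝ) → M → ℝ}
    (hF : ContinuousFromBelow F) (hG : ContinuousFromBelow G) (hG_mono : Monotone G) :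
    ContinuousFromBelow (F ∘ G) :=
  fun u hu v hv => hF (G ∘ u) (hG_mono.comp hu) (G v) (hG u hu v hv)

section iSupSemigroup

variable {M : Type*} {E : ℝ → (M → ℝ) → (M → ℝ)}

theorem iSup_semigroup_add_le_comp {Λ : Type*} [Nonempty Λ] {S : Λ → ℝ → (M → ℝ) → (M → ℝ)}
    (hsg : ∀ l s t, 0 ≤ s → 0 ≤ t → ∀ u : M → ℝ, S l (s + t) u = S l s (S l t u))
    (hbdd : ∀ h (u : M → ℝ) (x : M), BddAbove (Set.range fun l => S l h u x))
    (hE : ∀ h (u : M → ℝ) (x : M), E h u x = ⨆ l, S l h u x) (hmono : ∀ h, 0 ≤ h → Monotone (E h))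
    {h₁ h₂ : ℝ} (h₁_nonneg : 0 ≤ h₁) (h₂_nonneg : 0 ≤ h₂) (v : M → ℝ) :
    E (h₁ + h₂) v ≤ E h₁ (E h₂ v) := by
  have hS_le_E : ∀ h l (w : M → ℝ), S l h w ≤ E h w := fun h l w y => by
    rw [hE]
    exact le_ciSup (hbdd h w y) l
  intro x
  rw [hE]
  refine ciSup_le fun l => ?_
  rw [hsg l h₁ h₂ h₁_nonneg h₂_nonneg]
  exact (hS_le_E h₁ l _ x).trans (hmono h₁ h₁_nonneg (hS_le_E h₂ l v) x)

end iSupSemigroup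

section applyPart

variable {M : Type*} {E : ℝ → (M → ℝ) → (M → ℝ)}

theorem applyPart_cons_cons (a b : ℝ) (l : List ℝ) :
    applyPart E (a :: b :: l) = E (b - a) ∘ applyPart E (b :: l) := rfl

theorem applyPart_map_add_right (c : ℝ) :
    ∀ l : List ℝ, applyPart E (l.map (· + c)) = applyPart E l
  | [] | [_] => rfl
  | a :: b :: l => by
    have ih := applyPart_map_add_right c (b :: l)
    simp only [List.map_cons] at ih ⊢
    rw [applyPart_cons_cons, applyPart_cons_cons, ih, add_sub_add_right_eq_sub]

theorem applyPart_append_cons (c : ℝ) (r : List ℝ) :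
    ∀ l : List ℝ, applyPart E (l ++ c :: r) = applyPart E (l ++ [c]) ∘ applyPart E (c :: r)
  | [] | [_] => rfl
  | a :: b :: l => by
    simp only [List.cons_append, applyPart_cons_cons]
    rw [← List.cons_append, applyPart_append_cons c r (b :: l)]
    rfl

theorem applyPart_monotone (hmono : ∀ h, 0 ≤ h → Monotone (E h)) :
    ∀ {l : List ℝ}, l.Pairwise (· ≤ ·) → Monotone (applyPart E l)
  | [], _ | [_], _ => monotone_id
  | a :: b :: l, hl => by
    rw [applyPart_cons_cons]
    exact (hmono _ (sub_nonneg.2 (List.rel_of_pairwise_cons hl (by simp)))).comp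
      (applyPart_monotone hmono hl.of_cons)

theorem continuousFromBelow_applyPart (hmono : ∀ h, 0 ≤ h → Monotone (E h))
    (hcb : ∀ h, 0 ≤ h → ContinuousFromBelow (E h)) :
    ∀ {l : List ℝ}, l.Pairwise (· ≤ ·) → ContinuousFromBelow (applyPart E l)
  | [], _ | [_], _ => continuousFromBelow_id
  | a :: b :: l, hl => by
    rw [applyPart_cons_cons]
    exact (hcb _ (sub_nonneg.2 (List.rel_of_pairwise_cons hl (by simp)))).comp
      (continuousFromBelow_applyPart hmono hcb hl.of_cons) (applyPart_monotone hmono hl.of_cons)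

theorem applyPart_le_applyPart_orderedInsert (hmono : ∀ h, 0 ≤ h → Monotone (E h))
    (hadd_le : ∀ h₁ h₂, 0 ≤ h₁ → 0 ≤ h₂ → ∀ v, E (h₁ + h₂) v ≤ E h₁ (E h₂ v)) {s : ℝ} :
    ∀ {a : ℝ} {l : List ℝ}, (a :: l).Pairwise (· ≤ ·) → a ≤ s → (∃ b ∈ l, s ≤ b) →
      applyPart E (a :: l) ≤ applyPart E (a :: l.orderedInsert (· ≤ ·) s)
  | _, [], _, _, ⟨_, hb, _⟩ => absurd hb List.not_mem_nil
  | a, b :: l, hl, has, hb => by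
    have hab : a ≤ b := List.rel_of_pairwise_cons hl (by simp)
    by_cases hsb : s ≤ b
    · rw [List.orderedInsert_cons_of_le _ _ hsb]
      intro v
      simpa only [applyPart_cons_cons, Function.comp_apply, sub_add_sub_cancel'] using
        hadd_le (s - a) (b - s) (sub_nonneg.2 has) (sub_nonneg.2 hsb) (applyPart E (b :: l) v)
    · rw [List.orderedInsert_of_not_le _ _ hsb]
      have hb' : ∃ b' ∈ l, s ≤ b' := by
        obtain ⟨b', hb', hsb'⟩ := hb
        rcases List.mem_cons.1 hb' with rfl | hb'
        · exact absurd hsb' hsb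
        · exact ⟨b', hb', hsb'⟩
      intro v
      exact hmono _ (sub_nonneg.2 hab)
        (applyPart_le_applyPart_orderedInsert hmono hadd_le hl.of_cons (not_le.1 hsb).le hb' v)

end applyPart

namespace Finset

variable {α : Type*} [LinearOrder α]

theorem sort_eq_of_pairwise {s : Finset α} {l : List α} (hl : l.Pairwise (· ≤ ·))
    (hnd : l.Nodup) (hs : l.toFinset = s) : s.sort (· ≤ ·) = l := by
  subst hs
  exact (List.toFinset_sort _ hnd).2 hl

theorem sort_insert_eq_orderedInsert {s : Finset α} {a : α} (ha : a ∉ s) :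
    (insert a s).sort (· ≤ ·) = (s.sort (· ≤ ·)).orderedInsert (· ≤ ·) a := by
  have hperm := List.perm_orderedInsert (· ≤ ·) a (s.sort (· ≤ ·))
  refine sort_eq_of_pairwise ((pairwise_sort _ _).orderedInsert _ _)
    (hperm.nodup_iff.2 (List.nodup_cons.2 ⟨by simpa using ha, sort_nodup _ _⟩)) ?_
  rw [List.toFinset_eq_of_perm _ _ hperm, List.toFinset_cons, sort_toFinset]

theorem sort_union_of_le_of_le {A B : Finset α} {c : α} (hcB : c ∈ B) (hA : ∀ a ∈ A, a ≤ c)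
    (hB : ∀ b ∈ B, c ≤ b) :
    (A ∪ B).sort (· ≤ ·) = (A.erase c).sort (· ≤ ·) ++ B.sort (· ≤ ·) := by
  have hlt : ∀ a ∈ A.erase c, ∀ b ∈ B, a < b := fun a ha b hb =>
    ((hA a (mem_of_mem_erase ha)).lt_of_ne (ne_of_mem_erase ha)).trans_le (hB b hb)
  refine sort_eq_of_pairwise ?_ ?_ ?_
  · exact List.pairwise_append.2 ⟨pairwise_sort _ _, pairwise_sort _ _,
      fun a ha b hb => (hlt a (by simpa using ha) b (by simpa using hb)).le⟩
  · exact List.nodup_append.2 ⟨sort_nodup _ _, sort_nodup _ _,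
      fun a ha b hb => (hlt a (by simpa using ha) b (by simpa using hb)).ne⟩
  · rw [List.toFinset_append, sort_toFinset, sort_toFinset, erase_union_of_mem hcB]

theorem sort_eq_cons_of_le {s : Finset α} {a : α} (ha : a ∈ s) (hs : ∀ b ∈ s, a ≤ b) :
    s.sort (· ≤ ·) = a :: (s.erase a).sort (· ≤ ·) := by
  conv_lhs => rw [← insert_erase ha]
  exact sort_insert _ (fun b hb => hs b (mem_of_mem_erase hb)) (notMem_erase a s)

theorem sort_image_add_right [AddCommGroup α] [IsOrderedAddMonoid α] (s : Finset α) (c : α) :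
    (s.image (· + c)).sort (· ≤ ·) = (s.sort (· ≤ ·)).map (· + c) :=
  sort_eq_of_pairwise ((pairwise_sort _ _).map _ fun _ _ => (add_le_add_iff_right c).2)
    ((sort_nodup _ _).map (add_left_injective c))
    (by ext; simp only [List.mem_toFinset, List.mem_map, mem_sort, mem_image])

end Finset

section Epart

variable {M : Type*} {E : ℝ → (M → ℝ) → (M → ℝ)}

theorem Epart_eq_applyPart (π : Finset ℝ) : Epart E π = applyPart E (π.sort (· ≤ ·)) := rfl

theorem Epart_union {A B : Finset ℝ} {c : ℝ} (hcA : c ∈ A) (hcB : c ∈ B)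
    (hA : ∀ a ∈ A, a ≤ c) (hB : ∀ b ∈ B, c ≤ b) :
    Epart E (A ∪ B) = Epart E A ∘ Epart E B := by
  have hsortA : A.sort (· ≤ ·) = (A.erase c).sort (· ≤ ·) ++ [c] := by
    simpa [Finset.union_eq_left.2 (Finset.singleton_subset_iff.2 hcA)] using
      Finset.sort_union_of_le_of_le (B := {c}) (Finset.mem_singleton_self c) hA (by simp)
  have hsortB := Finset.sort_eq_cons_of_le hcB hB
  simp only [Epart_eq_applyPart]
  rw [Finset.sort_union_of_le_of_le hcB hA hB, hsortB, applyPart_append_cons, hsortA]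

theorem Epart_image_add_right (π : Finset ℝ) (c : ℝ) : Epart E (π.image (· + c)) = Epart E π := by
  simp only [Epart_eq_applyPart, Finset.sort_image_add_right, applyPart_map_add_right]

theorem Epart_monotone (hmono : ∀ h, 0 ≤ h → Monotone (E h)) (π : Finset ℝ) :
    Monotone (Epart E π) :=
  applyPart_monotone hmono (Finset.pairwise_sort _ _)

theorem continuousFromBelow_Epart (hmono : ∀ h, 0 ≤ h → Monotone (E h))
    (hcb : ∀ h, 0 ≤ h → ContinuousFromBelow (E h)) (π : Finset ℝ) :
    ContinuousFromBelow (Epart E π) :=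
  continuousFromBelow_applyPart hmono hcb (Finset.pairwise_sort _ _)

end Epart

section Partitions

variable {M : Type*} {E : ℝ → (M → ℝ) → (M → ℝ)}

theorem pair_mem_PartsOf {t : ℝ} (ht : 0 ≤ t) : ({0, t} : Finset ℝ) ∈ PartsOf t :=
  ⟨by simp, by simp, by simp [ht]⟩

theorem union_mem_PartsOf {t : ℝ} {π Δ : Finset ℝ} (hπ : π ∈ PartsOf t)
    (hΔ : ∀ s ∈ Δ, 0 ≤ s ∧ s ≤ t) : Δ ∪ π ∈ PartsOf t :=
  ⟨Finset.mem_union_right _ hπ.1, Finset.mem_union_right _ hπ.2.1,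
    fun s hs => (Finset.mem_union.1 hs).elim (hΔ s) (hπ.2.2 s)⟩

theorem union_image_add_mem_PartsOf {s t : ℝ} {σ τ : Finset ℝ} (hσ : σ ∈ PartsOf s)
    (hτ : τ ∈ PartsOf t) : σ ∪ τ.image (· + s) ∈ PartsOf (s + t) := by
  refine ⟨Finset.mem_union_left _ hσ.1,
    Finset.mem_union_right _ (Finset.mem_image.2 ⟨t, hτ.2.1, add_comm t s⟩), fun r hr => ?_⟩
  rcases Finset.mem_union.1 hr with hr | hr
  · have := hσ.2.2 r hr
    have := (hτ.2.2 t hτ.2.1).1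
    constructor <;> linarith
  · obtain ⟨q, hq, rfl⟩ := Finset.mem_image.1 hr
    have := hτ.2.2 q hq
    have := (hσ.2.2 s hσ.2.1).1
    constructor <;> linarith

theorem exists_eq_union_image_add_of_mem_PartsOf {s t : ℝ} {π : Finset ℝ}
    (hπ : π ∈ PartsOf (s + t)) (hsπ : s ∈ π) :
    ∃ σ ∈ PartsOf s, ∃ τ ∈ PartsOf t, π = σ ∪ τ.image (· + s) := by
  have hs := hπ.2.2 s hsπ
  refine ⟨π.filter (· ≤ s), ⟨?_, ?_, ?_⟩, (π.filter (s ≤ ·)).image (· - s), ⟨?_, ?_, ?_⟩, ?_⟩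
  · exact Finset.mem_filter.2 ⟨hπ.1, hs.1⟩
  · exact Finset.mem_filter.2 ⟨hsπ, le_rfl⟩
  · intro r hr
    exact ⟨(hπ.2.2 r (Finset.mem_filter.1 hr).1).1, (Finset.mem_filter.1 hr).2⟩
  · exact Finset.mem_image.2 ⟨s, Finset.mem_filter.2 ⟨hsπ, le_rfl⟩, sub_self s⟩
  · exact Finset.mem_image.2
      ⟨s + t, Finset.mem_filter.2 ⟨hπ.2.1, by linarith⟩, add_sub_cancel_left s t⟩
  · intro r hr
    obtain ⟨q, hq, rfl⟩ := Finset.mem_image.1 hr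
    have := hπ.2.2 q (Finset.mem_filter.1 hq).1
    have := (Finset.mem_filter.1 hq).2
    constructor <;> linarith
  · rw [Finset.image_image]
    ext r
    simp only [Finset.mem_union, Finset.mem_filter, Finset.mem_image, Function.comp_apply,
      sub_add_cancel, exists_eq_right]
    constructor
    · intro hr
      exact (le_total r s).imp (⟨hr, ·⟩) (⟨hr, ·⟩)
    · rintro (hr | hr) <;> exact hr.1

theorem Epart_union_image_add {s t : ℝ} {σ τ : Finset ℝ} (hσ : σ ∈ PartsOf s)
    (hτ : τ ∈ PartsOf t) : Epart E (σ ∪ τ.image (· + s)) = Epart E σ ∘ Epart E τ := by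
  rw [Epart_union hσ.2.1 (Finset.mem_image.2 ⟨0, hτ.1, zero_add s⟩) (fun r hr => (hσ.2.2 r hr).2),
    Epart_image_add_right]
  intro r hr
  obtain ⟨q, hq, rfl⟩ := Finset.mem_image.1 hr
  linarith [(hτ.2.2 q hq).1]

theorem Epart_le_Epart_insert (hmono : ∀ h, 0 ≤ h → Monotone (E h))
    (hadd_le : ∀ h₁ h₂, 0 ≤ h₁ → 0 ≤ h₂ → ∀ v, E (h₁ + h₂) v ≤ E h₁ (E h₂ v))
    {t s : ℝ} {π : Finset ℝ} (hπ : π ∈ PartsOf t) (hs0 : 0 ≤ s) (hst : s ≤ t) :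
    Epart E π ≤ Epart E (insert s π) := by
  by_cases hsπ : s ∈ π
  · rw [Finset.insert_eq_of_mem hsπ]
  have hs0' : 0 < s := hs0.lt_of_ne fun h => hsπ (h ▸ hπ.1)
  have hsort := Finset.sort_eq_cons_of_le hπ.1 fun r hr => (hπ.2.2 r hr).1
  rw [Epart_eq_applyPart, Epart_eq_applyPart, Finset.sort_insert_eq_orderedInsert hsπ, hsort,
    List.orderedInsert_of_not_le _ _ (not_le.2 hs0')]
  exact applyPart_le_applyPart_orderedInsert hmono hadd_le (hsort ▸ Finset.pairwise_sort _ _) hs0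
    ⟨t, Finset.mem_sort _ |>.2 (Finset.mem_erase.2 ⟨by linarith, hπ.2.1⟩), hst⟩

theorem Epart_le_Epart_of_subset (hmono : ∀ h, 0 ≤ h → Monotone (E h))
    (hadd_le : ∀ h₁ h₂, 0 ≤ h₁ → 0 ≤ h₂ → ∀ v, E (h₁ + h₂) v ≤ E h₁ (E h₂ v)) {t : ℝ}
    {π π' : Finset ℝ} (hπ : π ∈ PartsOf t) (hπ' : π' ∈ PartsOf t) (hππ' : π ⊆ π') :
    Epart E π ≤ Epart E π' := by
  suffices h : ∀ Δ ⊆ π', Epart E π ≤ Epart E (Δ ∪ π) by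
    simpa [Finset.union_eq_left.2 hππ'] using h π' subset_rfl
  intro Δ
  induction Δ using Finset.induction_on with
  | empty => simp
  | insert s Δ _ ih =>
    intro hΔ
    have hs := hπ'.2.2 s (hΔ (Finset.mem_insert_self s Δ))
    rw [Finset.insert_union]
    exact (ih ((Finset.subset_insert s Δ).trans hΔ)).trans <|
      Epart_le_Epart_insert hmono hadd_le
        (union_mem_PartsOf hπ fun r hr => hπ'.2.2 r (hΔ (Finset.mem_insert_of_mem hr))) hs.1 hs.2

end Partitions

section Nisio

variable {M : Type*} {E : ℝ → (M → ℝ) → (M → ℝ)}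

theorem Epart_le_Nisio {t : ℝ} {π : Finset ℝ} {u : M → ℝ} {x : M}
    (hbdd : BddAbove (Set.range fun π : PartsOf t => Epart E π.1 u x)) (hπ : π ∈ PartsOf t) :
    Epart E π u x ≤ Nisio E t u x :=
  le_ciSup hbdd ⟨π, hπ⟩

theorem Nisio_le {t c : ℝ} {u : M → ℝ} {x : M} (ht : 0 ≤ t)
    (h : ∀ π ∈ PartsOf t, Epart E π u x ≤ c) : Nisio E t u x ≤ c :=
  have : Nonempty (PartsOf t) := ⟨⟨_, pair_mem_PartsOf ht⟩⟩
  ciSup_le fun π => h π.1 π.2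

theorem Nisio_add_le (hmono : ∀ h, 0 ≤ h → Monotone (E h))
    (hadd_le : ∀ h₁ h₂, 0 ≤ h₁ → 0 ≤ h₂ → ∀ v, E (h₁ + h₂) v ≤ E h₁ (E h₂ v))
    (hbdd : ∀ t (u : M → ℝ) (x : M), BddAbove (Set.range fun π : PartsOf t => Epart E π.1 u x))
    {s t : ℝ} (hs : 0 ≤ s) (ht : 0 ≤ t) (u : M → ℝ) :
    Nisio E (s + t) u ≤ Nisio E s (Nisio E t u) := by
  intro x
  refine Nisio_le (add_nonneg hs ht) fun π hπ => ?_
  have hsπ : insert s π ∈ PartsOf (s + t) :=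
    union_mem_PartsOf (Δ := {s}) hπ (by simpa using ⟨hs, ht⟩)
  obtain ⟨σ, hσ, τ, hτ, hστ⟩ :=
    exists_eq_union_image_add_of_mem_PartsOf hsπ (Finset.mem_insert_self s π)
  calc Epart E π u x
      ≤ Epart E (insert s π) u x := Epart_le_Epart_insert hmono hadd_le hπ hs (by linarith) u x
    _ = Epart E σ (Epart E τ u) x := by rw [hστ, Epart_union_image_add hσ hτ, Function.comp_apply]
    _ ≤ Epart E σ (Nisio E t u) x :=
      Epart_monotone hmono σ (fun y => Epart_le_Nisio (hbdd t u y) hτ) x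
    _ ≤ Nisio E s (Nisio E t u) x := Epart_le_Nisio (hbdd s _ x) hσ

theorem Nisio_le_Nisio_add (hmono : ∀ h, 0 ≤ h → Monotone (E h))
    (hadd_le : ∀ h₁ h₂, 0 ≤ h₁ → 0 ≤ h₂ → ∀ v, E (h₁ + h₂) v ≤ E h₁ (E h₂ v))
    (hcb : ∀ h, 0 ≤ h → ContinuousFromBelow (E h))
    (hbdd : ∀ t (u : M → ℝ) (x : M), BddAbove (Set.range fun π : PartsOf t => Epart E π.1 u x))
    {s t : ℝ} (hs : 0 ≤ s) {u : M → ℝ}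
    (happrox : ∃ π : ℕ → Finset ℝ, (∀ n, π n ∈ PartsOf t) ∧ Monotone π ∧
      Tendsto (fun n => Epart E (π n) u) atTop (𝓝 (Nisio E t u))) :
    Nisio E s (Nisio E t u) ≤ Nisio E (s + t) u := by
  obtain ⟨π, hπ, hπ_mono, hπ_lim⟩ := happrox
  have hmono_seq : Monotone fun n => Epart E (π n) u := fun m n hmn =>
    Epart_le_Epart_of_subset hmono hadd_le (hπ m) (hπ n) (hπ_mono hmn) u
  intro x
  refine Nisio_le hs fun σ hσ => ?_
  have hlim := tendsto_pi_nhds.1 (continuousFromBelow_Epart hmono hcb σ _ hmono_seq _ hπ_lim) x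
  refine le_of_tendsto' hlim fun n => ?_
  calc Epart E σ (Epart E (π n) u) x
      = Epart E (σ ∪ (π n).image (· + s)) u x := by rw [Epart_union_image_add hσ (hπ n)]; rfl
    _ ≤ Nisio E (s + t) u x :=
      Epart_le_Nisio (hbdd _ u x) (union_image_add_mem_PartsOf hσ (hπ n))

end Nisio

theorem stmt4_general {M Λ : Type*} [Nonempty Λ]
    (S : Λ → ℝ → (M → ℝ) → (M → ℝ))
    (hsg : ∀ l s t, 0 ≤ s → 0 ≤ t → ∀ u : M → ℝ, S l (s + t) u = S l s (S l t u))
    (hbdd : ∀ h (u : M → ℝ) (x : M), BddAbove (Set.range fun l => S l h u x))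
    (E : ℝ → (M → ℝ) → (M → ℝ))
    (hE : ∀ h (u : M → ℝ) (x : M), E h u x = ⨆ l, S l h u x)
    -- each `E_h` is monotone
    (hmono : ∀ h, 0 ≤ h → ∀ u v : M → ℝ, (∀ x, u x ≤ v x) → ∀ x, E h u x ≤ E h v x)
    -- each `E_h` is continuous from below
    (hcb : ∀ h, 0 ≤ h → ∀ (u : ℕ → M → ℝ) (v : M → ℝ),
      (∀ n x, u n x ≤ u (n + 1) x) →
      (∀ x, Filter.Tendsto (fun n => u n x) Filter.atTop (nhds (v x))) →
      ∀ x, Filter.Tendsto (fun n => E h (u n) x) Filter.atTop (nhds (E h v x)))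
    -- the pointwise suprema defining the Nisio semigroup are finite
    (hbddN : ∀ t (u : M → ℝ) (x : M),
      BddAbove (Set.range fun π : PartsOf t => Epart E π.1 u x))
    -- approximating increasing sequences of partitions exist
    (happrox : ∀ t, 0 ≤ t → ∀ u : M → ℝ, ∃ π : ℕ → Finset ℝ,
      (∀ n, π n ∈ PartsOf t) ∧ (∀ n, π n ⊆ π (n + 1)) ∧
      ∀ x, Filter.Tendsto (fun n => Epart E (π n) u x) Filter.atTop
        (nhds (Nisio E t u x))) :
    ∀ s t, 0 ≤ s → 0 ≤ t → ∀ (u : M → ℝ) (x : M),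
      Nisio E (s + t) u x = Nisio E s (Nisio E t u) x := by
  intro s t hs ht u x
  have hmono' : ∀ h, 0 ≤ h → Monotone (E h) := hmono
  have hadd_le : ∀ h₁ h₂, 0 ≤ h₁ → 0 ≤ h₂ → ∀ v, E (h₁ + h₂) v ≤ E h₁ (E h₂ v) :=
    fun _ _ h₁_nonneg h₂_nonneg => iSup_semigroup_add_le_comp hsg hbdd hE hmono' h₁_nonneg h₂_nonneg
  have hcb' : ∀ h, 0 ≤ h → ContinuousFromBelow (E h) := fun h hh w hw v hv =>
    tendsto_pi_nhds.2 <| hcb h hh w v (fun n => hw n.le_succ) (tendsto_pi_nhds.1 hv)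
  obtain ⟨π, hπ, hπ_succ, hπ_lim⟩ := happrox t ht u
  exact le_antisymm (Nisio_add_le hmono' hadd_le hbddN hs ht u x) <|
    Nisio_le_Nisio_add hmono' hadd_le hcb' hbddN hs
      ⟨π, hπ, monotone_nat_of_le_succ hπ_succ, tendsto_pi_nhds.2 hπ_lim⟩ x

theorem stmt4 {M Λ : Type*} [Nonempty Λ]
    (S : Λ → ℝ → (M → ℝ) → (M → ℝ))
    (hid : ∀ l (u : M → ℝ), S l 0 u = u)
    (hsg : ∀ l s t, 0 ≤ s → 0 ≤ t → ∀ u : M → ℝ, S l (s + t) u = S l s (S l t u))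
    (hadd : ∀ l h (u v : M → ℝ), S l h (u + v) = S l h u + S l h v)
    (hsmul : ∀ l h (c : ℝ) (u : M → ℝ), S l h (c • u) = c • S l h u)
    (hbdd : ∀ h (u : M → ℝ) (x : M), BddAbove (Set.range fun l => S l h u x))
    (E : ℝ → (M → ℝ) → (M → ℝ))
    (hE : ∀ h (u : M → ℝ) (x : M), E h u x = ⨆ l, S l h u x)
    -- each `E_h` is monotone
    (hmono : ∀ h, 0 ≤ h → ∀ u v : M → ℝ, (∀ x, u x ≤ v x) → ∀ x, E h u x ≤ E h v x)
    -- each `E_h` is continuous from below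
    (hcb : ∀ h, 0 ≤ h → ∀ (u : ℕ → M → ℝ) (v : M → ℝ),
      (∀ n x, u n x ≤ u (n + 1) x) →
      (∀ x, Filter.Tendsto (fun n => u n x) Filter.atTop (nhds (v x))) →
      ∀ x, Filter.Tendsto (fun n => E h (u n) x) Filter.atTop (nhds (E h v x)))
    -- the pointwise suprema defining the Nisio semigroup are finite
    (hbddN : ∀ t (u : M → ℝ) (x : M),
      BddAbove (Set.range fun π : PartsOf t => Epart E π.1 u x))
    -- approximating increasing sequences of partitions exist
    (happrox : ∀ t, 0 ≤ t → ∀ u : M → ℝ, ∃ π : ℕ → Finset ℝ,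
      (∀ n, π n ∈ PartsOf t) ∧ (∀ n, π n ⊆ π (n + 1)) ∧
      ∀ x, Filter.Tendsto (fun n => Epart E (π n) u x) Filter.atTop
        (nhds (Nisio E t u x))) :
    ∀ s t, 0 ≤ s → 0 ≤ t → ∀ (u : M → ℝ) (x : M),
      Nisio E (s + t) u x = Nisio E s (Nisio E t u) x :=
  stmt4_general S hsg hbdd E hE hmono hcb hbddN happrox
end

section
/- Let Φ_F be the semiflow of x' = F(x) with F Lipschitz (constant β, α = β + ‖F(0)‖), let κ(x) = (1+‖x‖)^{−p} for some p > 0, and define the Koopman operator (S_F(t)u)(x) := u(Φ_F(t,x)). Then ‖S_F(t)u‖_κ ≤ e^{αpt}‖u‖_κ and, for Lipschitz u, ‖S_F(t)u‖_Lip ≤ e^{βt}‖u‖_Lip, where ‖u‖_κ = sup_x κ(x)|u(x)|. -/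
theorem stmt15 {X : Type*} [NormedAddCommGroup X] [NormedSpace ℝ X]
    (F : X → X) (β : ℝ) (hβ : 0 ≤ β)
    (hF : ∀ x y, ‖F x - F y‖ ≤ β * ‖x - y‖)
    (α : ℝ) (hα : α = β + ‖F 0‖)
    (Φ : ℝ → X → X)
    (hΦ0 : ∀ x, Φ 0 x = x)
    (hΦd : ∀ x t, 0 ≤ t →
      HasDerivWithinAt (fun s => Φ s x) (F (Φ t x)) (Set.Ici 0) t)
    (p : ℝ) (hp : 0 < p)
    (t : ℝ) (ht : 0 ≤ t) :
    -- `‖S_F(t)u‖_κ ≤ e^{αpt} ‖u‖_κ` with `κ x = (1+‖x‖)^{-p}`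
    (∀ (u : X → ℝ) (C : ℝ), (∀ x, (1 + ‖x‖) ^ (-p) * |u x| ≤ C) →
      ∀ x, (1 + ‖x‖) ^ (-p) * |u (Φ t x)| ≤ Real.exp (α * p * t) * C) ∧
    (∀ (u : X → ℝ) (L : ℝ), 0 ≤ L → (∀ x y, |u x - u y| ≤ L * ‖x - y‖) →
      ∀ x y, |u (Φ t x) - u (Φ t y)| ≤ Real.exp (β * t) * L * ‖x - y‖) := by
  have hα0 : 0 ≤ α := hα ▸ add_nonneg hβ (norm_nonneg _)
  -- continuity of trajectories
  have hcont : ∀ x : X, ContinuousOn (fun s => Φ s x) (Set.Icc 0 t) := by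
    intro x s hs
    exact ((hΦd x s hs.1).continuousWithinAt).mono (fun y hy => hy.1)
  have hderiv : ∀ x : X, ∀ s ∈ Set.Ico (0:ℝ) t,
      HasDerivWithinAt (fun s => Φ s x) (F (Φ s x)) (Set.Ici s) s := by
    intro x s hs
    exact (hΦd x s hs.1).mono (Set.Ici_subset_Ici.2 hs.1)
  -- Lipschitz estimate for the flow
  have hLip : ∀ x y : X, ‖Φ t x - Φ t y‖ ≤ Real.exp (β * t) * ‖x - y‖ := by
    intro x y
    have hv : ∀ s : ℝ, LipschitzWith β.toNNReal (fun z : X => F z) := by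
      intro _
      apply LipschitzWith.of_dist_le_mul
      intro a b
      simpa [dist_eq_norm, Real.coe_toNNReal β hβ] using hF a b
    have := dist_le_of_trajectories_ODE (v := fun _ z => F z) (δ := ‖x - y‖) hv (hcont x)
      (hderiv x) (hcont y) (hderiv y) (le_of_eq (by simp [hΦ0, dist_eq_norm]))
      t ⟨ht, le_refl t⟩
    simpa [dist_eq_norm, Real.coe_toNNReal β hβ, mul_comm] using this
  -- growth estimate for the flow
  have hgrow : ∀ x : X, 1 + ‖Φ t x‖ ≤ (1 + ‖x‖) * Real.exp (α * t) := by
    intro x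
    have hFb : ∀ z : X, ‖F z‖ ≤ α * ‖z‖ + α := by
      intro z
      have h1 : ‖F z‖ ≤ ‖F z - F 0‖ + ‖F 0‖ := by
        simpa using norm_add_le (F z - F 0) (F 0)
      have h2 : ‖F z - F 0‖ ≤ β * ‖z‖ := by simpa using hF z 0
      have : ‖F z‖ ≤ β * ‖z‖ + ‖F 0‖ := le_trans h1 (by linarith)
      have hβα : β ≤ α := by rw [hα]; linarith [norm_nonneg (F 0)]
      have hF0α : ‖F 0‖ ≤ α := by rw [hα]; linarith
      nlinarith [norm_nonneg z]
    have := norm_le_gronwallBound_of_norm_deriv_right_le (f := fun s => Φ s x)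
      (f' := fun s => F (Φ s x)) (δ := ‖x‖) (K := α) (ε := α)
      (hcont x) (hderiv x) (le_of_eq (by simp [hΦ0]))
      (fun s _ => hFb (Φ s x)) t ⟨ht, le_refl t⟩
    rw [sub_zero] at this
    have hbd : gronwallBound ‖x‖ α α t ≤ (1 + ‖x‖) * Real.exp (α * t) - 1 := by
      rcases eq_or_lt_of_le hα0 with h0 | h0
      · rw [← h0]
        simp [gronwallBound_K0]
      · rw [gronwallBound_of_K_ne_0 (ne_of_gt h0)]
        show ‖x‖ * Real.exp (α * t) + α / α * (Real.exp (α * t) - 1)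
          ≤ (1 + ‖x‖) * Real.exp (α * t) - 1
        rw [div_self (ne_of_gt h0), one_mul]
        ring_nf
        linarith
    linarith
  constructor
  · -- weighted sup-norm estimate
    intro u C hC x
    have hx1 : (0:ℝ) < 1 + ‖x‖ := by positivity
    have hΦ1 : (0:ℝ) < 1 + ‖Φ t x‖ := by positivity
    have hC0 : 0 ≤ C := le_trans (by positivity) (hC x)
    have key : |u (Φ t x)| ≤ C * (1 + ‖Φ t x‖) ^ p := by
      have h := hC (Φ t x)
      have hpow : (0:ℝ) < (1 + ‖Φ t x‖) ^ (-p) := Real.rpow_pos_of_pos hΦ1 _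
      have := mul_le_mul_of_nonneg_right h (le_of_lt (Real.rpow_pos_of_pos hΦ1 p))
      calc |u (Φ t x)| = (1 + ‖Φ t x‖) ^ (-p) * |u (Φ t x)| * (1 + ‖Φ t x‖) ^ p := by
            rw [mul_comm ((1 + ‖Φ t x‖) ^ (-p)) _, mul_assoc,
              ← Real.rpow_add hΦ1]
            simp
        _ ≤ C * (1 + ‖Φ t x‖) ^ p := this
    have hpow2 : (1 + ‖Φ t x‖) ^ p ≤ ((1 + ‖x‖) * Real.exp (α * t)) ^ p :=
      Real.rpow_le_rpow (by positivity) (hgrow x) (le_of_lt hp)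
    have hmulpow : ((1 + ‖x‖) * Real.exp (α * t)) ^ p
        = (1 + ‖x‖) ^ p * Real.exp (α * p * t) := by
      rw [Real.mul_rpow (le_of_lt hx1) (Real.exp_pos _).le, ← Real.exp_mul]
      ring_nf
    calc (1 + ‖x‖) ^ (-p) * |u (Φ t x)|
        ≤ (1 + ‖x‖) ^ (-p) * (C * ((1 + ‖x‖) ^ p * Real.exp (α * p * t))) := by
          apply mul_le_mul_of_nonneg_left _ (Real.rpow_pos_of_pos hx1 _).le
          exact le_trans key (by
            rw [← hmulpow]
            exact mul_le_mul_of_nonneg_left hpow2 hC0)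
      _ = Real.exp (α * p * t) * C := by
          rw [show (1 + ‖x‖) ^ (-p) * (C * ((1 + ‖x‖) ^ p * Real.exp (α * p * t)))
              = ((1 + ‖x‖) ^ (-p) * (1 + ‖x‖) ^ p) * (C * Real.exp (α * p * t)) by ring,
            ← Real.rpow_add hx1]
          simp [mul_comm]
  · -- Lipschitz estimate
    intro u L hL hu x y
    calc |u (Φ t x) - u (Φ t y)| ≤ L * ‖Φ t x - Φ t y‖ := hu _ _
      _ ≤ L * (Real.exp (β * t) * ‖x - y‖) :=
          mul_le_mul_of_nonneg_left (hLip x y) hL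
      _ = Real.exp (β * t) * L * ‖x - y‖ := by ring
end

section
/- Let Φ_F be the semiflow of x' = F(x) with F Lipschitz (β) and α := β + ‖F(0)‖, and let u be θ-Hölder continuous with constant C (|u(x) − u(y)| ≤ C‖x−y‖^θ, 0 < θ ≤ 1 with θ ≤ p). Then for weighted norm κ(x) = (1+‖x‖)^{−p}, sup_x κ(x)|u(Φ_F(t,x)) − u(x)| ≤ C (e^{αt} − 1)^θ, which tends to 0 as t → 0. -/
/-!
Along a trajectory `γ` of `x' = F x` the displacement `γ t - γ 0` has derivative `F (γ t)`, and the
Lipschitz bound gives `‖F y‖ ≤ α (1 + ‖y‖)`, so Gronwall bounds it by `(1 + ‖γ 0‖)(e^{αt} - 1)`.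
Hölder continuity turns this into `C (1 + ‖x‖)^θ (e^{αt} - 1)^θ`, and the weight `(1 + ‖x‖)^{-p}`
absorbs the factor `(1 + ‖x‖)^θ` because `θ ≤ p`.
-/

open Real Set Filter Topology

lemma norm_le_mul_one_add_norm_of_lipschitz {E G : Type*} [SeminormedAddCommGroup E]
    [SeminormedAddCommGroup G] {F : E → G} {β : ℝ} (hβ : 0 ≤ β)
    (hF : ∀ x y, ‖F x - F y‖ ≤ β * ‖x - y‖) (y : E) :
    ‖F y‖ ≤ (β + ‖F 0‖) * (1 + ‖y‖) := by
  have hy := hF y 0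
  rw [sub_zero] at hy
  have := norm_le_insert' (F y) (F 0)
  nlinarith [norm_nonneg y, norm_nonneg (F 0)]

lemma gronwallBound_zero_mul (K c t : ℝ) :
    gronwallBound 0 K (K * c) t = c * (exp (K * t) - 1) := by
  rcases eq_or_ne K 0 with rfl | hK
  · simp [gronwallBound_K0]
  · rw [gronwallBound_of_K_ne_0 hK]
    field_simp
    ring

theorem norm_sub_le_of_hasDerivWithinAt_of_linear_growth {E : Type*} [NormedAddCommGroup E]
    [NormedSpace ℝ E] {F : E → E} {α : ℝ} (hF : ∀ y, ‖F y‖ ≤ α * (1 + ‖y‖)) {γ : ℝ → E}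
    (hγ : ∀ t, 0 ≤ t → HasDerivWithinAt γ (F (γ t)) (Ici 0) t) {t : ℝ} (ht : 0 ≤ t) :
    ‖γ t - γ 0‖ ≤ (1 + ‖γ 0‖) * (exp (α * t) - 1) := by
  have hα : 0 ≤ α := by nlinarith [hF 0, norm_nonneg (F 0), norm_nonneg (0 : E)]
  have hderiv : ∀ s, 0 ≤ s → HasDerivWithinAt (fun s => γ s - γ 0) (F (γ s)) (Ici 0) s :=
    fun s hs => (hγ s hs).sub_const _
  have bound : ∀ s ∈ Ico 0 t,
      ‖F (γ s)‖ ≤ α * ‖γ s - γ 0‖ + α * (1 + ‖γ 0‖) := by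
    intro s _
    have := norm_le_norm_add_norm_sub' (γ s) (γ 0)
    nlinarith [hF (γ s)]
  have := norm_le_gronwallBound_of_norm_deriv_right_le (δ := 0)
    (fun s hs => ((hderiv s hs.1).continuousWithinAt).mono fun _ hr => hr.1)
    (fun s hs => (hderiv s hs.1).mono (Ici_subset_Ici.2 hs.1))
    (by simp) bound t ⟨ht, le_rfl⟩
  rwa [sub_zero, gronwallBound_zero_mul] at this

lemma rpow_neg_mul_mul_rpow_le {w d δ C θ p : ℝ} (hw : 1 ≤ w) (hd : 0 ≤ d) (hδ : 0 ≤ δ)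
    (hdw : d ≤ w * δ) (hC : 0 ≤ C) (hθ : 0 ≤ θ) (hθp : θ ≤ p) :
    w ^ (-p) * (C * d ^ θ) ≤ C * δ ^ θ := by
  have hw0 : 0 < w := one_pos.trans_le hw
  have hweight : w ^ (-p) * w ^ θ ≤ 1 := by
    rw [← rpow_add hw0]
    exact rpow_le_one_of_one_le_of_nonpos hw (by linarith)
  calc w ^ (-p) * (C * d ^ θ)
      ≤ w ^ (-p) * (C * (w ^ θ * δ ^ θ)) := by
        rw [← mul_rpow hw0.le hδ]
        gcongr
    _ = (w ^ (-p) * w ^ θ) * (C * δ ^ θ) := by ring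
    _ ≤ C * δ ^ θ := mul_le_of_le_one_left (by positivity) hweight

lemma tendsto_mul_rpow_exp_mul_sub_one (C α : ℝ) {θ : ℝ} (hθ : 0 < θ) :
    Tendsto (fun t => C * (exp (α * t) - 1) ^ θ) (𝓝 0) (𝓝 0) := by
  have hcont : Continuous fun t => C * (exp (α * t) - 1) ^ θ :=
    continuous_const.mul ((by fun_prop : Continuous fun t => exp (α * t) - 1).rpow_const
      fun _ => Or.inr hθ.le)
  simpa [zero_rpow hθ.ne'] using hcont.tendsto 0

theorem stmt16_general {X : Type*} [NormedAddCommGroup X] [NormedSpace ℝ X]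
    (F : X → X) (β : ℝ) (hβ : 0 ≤ β)
    (hF : ∀ x y, ‖F x - F y‖ ≤ β * ‖x - y‖)
    (α : ℝ) (hα : α = β + ‖F 0‖)
    (Φ : ℝ → X → X)
    (hΦ0 : ∀ x, Φ 0 x = x)
    (hΦd : ∀ x t, 0 ≤ t →
      HasDerivWithinAt (fun s => Φ s x) (F (Φ t x)) (Set.Ici 0) t)
    (p θ : ℝ) (hθ0 : 0 < θ) (hθp : θ ≤ p)
    (u : X → ℝ) (C : ℝ) (hC : 0 ≤ C)
    (hHolder : ∀ x y, |u x - u y| ≤ C * ‖x - y‖ ^ θ) :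
    (∀ t, 0 ≤ t → ∀ x,
      (1 + ‖x‖) ^ (-p) * |u (Φ t x) - u x| ≤ C * (Real.exp (α * t) - 1) ^ θ) ∧
    Filter.Tendsto (fun t => C * (Real.exp (α * t) - 1) ^ θ)
      (nhdsWithin 0 (Set.Ici 0)) (nhds 0) := by
  have hgrowth : ∀ y, ‖F y‖ ≤ α * (1 + ‖y‖) :=
    hα ▸ norm_le_mul_one_add_norm_of_lipschitz hβ hF
  refine ⟨fun t ht x => ?_,
    tendsto_nhdsWithin_of_tendsto_nhds (tendsto_mul_rpow_exp_mul_sub_one C α hθ0)⟩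
  have hdisp : ‖Φ t x - x‖ ≤ (1 + ‖x‖) * (exp (α * t) - 1) := by
    simpa [hΦ0] using norm_sub_le_of_hasDerivWithinAt_of_linear_growth hgrowth (hΦd x) ht
  have hexp : 0 ≤ exp (α * t) - 1 :=
    sub_nonneg.2 (one_le_exp (mul_nonneg (hα ▸ add_nonneg hβ (norm_nonneg _)) ht))
  calc (1 + ‖x‖) ^ (-p) * |u (Φ t x) - u x|
      ≤ (1 + ‖x‖) ^ (-p) * (C * ‖Φ t x - x‖ ^ θ) := by
        gcongr
        exact hHolder _ _
    _ ≤ C * (exp (α * t) - 1) ^ θ :=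
        rpow_neg_mul_mul_rpow_le (le_add_of_nonneg_right (norm_nonneg x)) (norm_nonneg _)
          hexp hdisp hC hθ0.le hθp

theorem stmt16 {X : Type*} [NormedAddCommGroup X] [NormedSpace ℝ X]
    (F : X → X) (β : ℝ) (hβ : 0 ≤ β)
    (hF : ∀ x y, ‖F x - F y‖ ≤ β * ‖x - y‖)
    (α : ℝ) (hα : α = β + ‖F 0‖)
    (Φ : ℝ → X → X)
    (hΦ0 : ∀ x, Φ 0 x = x)
    (hΦd : ∀ x t, 0 ≤ t →
      HasDerivWithinAt (fun s => Φ s x) (F (Φ t x)) (Set.Ici 0) t)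
    (p θ : ℝ) (hp : 0 < p) (hθ0 : 0 < θ) (hθ1 : θ ≤ 1) (hθp : θ ≤ p)
    (u : X → ℝ) (C : ℝ) (hC : 0 ≤ C)
    (hHolder : ∀ x y, |u x - u y| ≤ C * ‖x - y‖ ^ θ) :
    (∀ t, 0 ≤ t → ∀ x,
      (1 + ‖x‖) ^ (-p) * |u (Φ t x) - u x| ≤ C * (Real.exp (α * t) - 1) ^ θ) ∧
    Filter.Tendsto (fun t => C * (Real.exp (α * t) - 1) ^ θ)
      (nhdsWithin 0 (Set.Ici 0)) (nhds 0) :=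
  stmt16_general F β hβ hF α hα Φ hΦ0 hΦd p θ hθ0 hθp u C hC hHolder
end
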